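/- Assume μ₁ + μ₂ > 0 and p(z,x) > 0 for all (z,x). Let q₁, q₂, q₃ be strictly positive (a pmf on ℛ̂, conditional pmfs on 𝒵 given (r̂,x), and conditional pmfs on ℛ̂ given z, respectively). Let w' be the channel w'(r̂|z,x) = (1/η(z,x))·[ q₁(r̂)^{μ₁} q₂(z|r̂,x)^{μ₁} q₃(r̂|z)^{μ₂} 2^{−∑_r p(r|z,x) d(r̂,r)} ]^{1/(μ₁+μ₂)} (η(z,x) a normalizer), and let q₁', q₂', q₃' be the distributions induced by w', namely q₁'(r̂) = ∑_{z,x} w'(r̂|z,x)p(z,x), q₂'(z|r̂,x) = w'(r̂|z,x)p(z|x)/∑_{z'} w'(r̂|z',x)p(z'|x), q₃'(r̂|z) = ∑_x w'(r̂|z,x)p(x|z), all of which are strictly positive. Then f(w'; q₁'; q₂'; q₃') ≤ f(w; q₁; q₂; q₃) for every channel w; in particular one full iteration of the Blahut–Arimoto algorithm does not increase the objective f. -/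

import Mathlib

/-!
One Blahut–Arimoto iteration is two steps of alternating minimisation of `f`. For a fixed
channel `w`, each `log₂ qᵢ` term of `f` is a cross-entropy against the corresponding
conditional of the joint law `w(r̂|z,x) p(z,x)`, so by Gibbs' inequality the induced
distributions `qᵢ'` minimise `f(w; ·)`. For fixed `q₁, q₂, q₃`, `f(w; q)` is
`(μ₁+μ₂) ∑ p(z,x) ∑_{r̂} w log₂ (w / K)` up to a constant, which over the simplex is
minimised by the normalised kernel `K / ∑ K`, again by Gibbs' inequality.
-/

open Real Finset

noncomputable section

variable {𝒵 𝒳 ℛ ℛh : Type} [Fintype 𝒵] [Fintype 𝒳] [Fintype ℛ] [Fintype ℛh]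

/-- Marginal `p(z,x)` of the fixed joint pmf `p(z,x,r)`. -/
def pZX (p : 𝒵 → 𝒳 → ℛ → ℝ) (z : 𝒵) (x : 𝒳) : ℝ := ∑ r, p z x r

/-- Marginal `p(x)`. -/
def pX (p : 𝒵 → 𝒳 → ℛ → ℝ) (x : 𝒳) : ℝ := ∑ z, ∑ r, p z x r

/-- Marginal `p(z)`. -/
def pZ (p : 𝒵 → 𝒳 → ℛ → ℝ) (z : 𝒵) : ℝ := ∑ x, ∑ r, p z x r

/-- `p` is a probability mass function on `𝒵 × 𝒳 × ℛ`. -/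
def IsPMF (p : 𝒵 → 𝒳 → ℛ → ℝ) : Prop :=
  (∀ z x r, 0 ≤ p z x r) ∧ ∑ z, ∑ x, ∑ r, p z x r = 1

/-- A channel `w(r̂|z,x)`: entries in `[0,1]` summing to `1` over `r̂` for each `(z,x)`. -/
def IsChannel (w : ℛh → 𝒵 → 𝒳 → ℝ) : Prop :=
  (∀ rh z x, 0 ≤ w rh z x ∧ w rh z x ≤ 1) ∧ (∀ z x, ∑ rh, w rh z x = 1)

/-- Induced joint pmf `q(r̂,z,x) = w(r̂|z,x) p(z,x)`. -/
def qJ (p : 𝒵 → 𝒳 → ℛ → ℝ) (w : ℛh → 𝒵 → 𝒳 → ℝ) (rh : ℛh) (z : 𝒵) (x : 𝒳) : ℝ :=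
  w rh z x * pZX p z x

/-- Induced marginal `q(r̂,x)`. -/
def qRhX (p : 𝒵 → 𝒳 → ℛ → ℝ) (w : ℛh → 𝒵 → 𝒳 → ℝ) (rh : ℛh) (x : 𝒳) : ℝ :=
  ∑ z, qJ p w rh z x

/-- Induced marginal `q(r̂)`. -/
def qRh (p : 𝒵 → 𝒳 → ℛ → ℝ) (w : ℛh → 𝒵 → 𝒳 → ℝ) (rh : ℛh) : ℝ :=
  ∑ z, ∑ x, qJ p w rh z x

/-- Induced marginal `q(r̂,z)`. -/
def qRhZ (p : 𝒵 → 𝒳 → ℛ → ℝ) (w : ℛh → 𝒵 → 𝒳 → ℝ) (rh : ℛh) (z : 𝒵) : ℝ :=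
  ∑ x, qJ p w rh z x

/-- Induced marginal `q(z)`. -/
def qZ (p : 𝒵 → 𝒳 → ℛ → ℝ) (w : ℛh → 𝒵 → 𝒳 → ℝ) (z : 𝒵) : ℝ :=
  ∑ rh, ∑ x, qJ p w rh z x

/-- Expected distortion `E_q[d(R̂,R)]` under `q(r̂,z,x,r) = w(r̂|z,x) p(z,x,r)`. -/
def expDist (p : 𝒵 → 𝒳 → ℛ → ℝ) (w : ℛh → 𝒵 → 𝒳 → ℝ) (d : ℛh → ℛ → ℝ) : ℝ :=
  ∑ rh, ∑ z, ∑ x, ∑ r, w rh z x * p z x r * d rh r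

/-- Mutual information `I(R̂;X)` of the induced joint pmf (base-2 logs, `0·log₂0 = 0`). -/
def IRhX (p : 𝒵 → 𝒳 → ℛ → ℝ) (w : ℛh → 𝒵 → 𝒳 → ℝ) : ℝ :=
  ∑ rh, ∑ x, qRhX p w rh x * logb 2 (qRhX p w rh x / (qRh p w rh * pX p x))

/-- Mutual information `I(R̂,Z;X)` of the induced joint pmf. -/
def IRhZX (p : 𝒵 → 𝒳 → ℛ → ℝ) (w : ℛh → 𝒵 → 𝒳 → ℝ) : ℝ :=
  ∑ rh, ∑ z, ∑ x, qJ p w rh z x * logb 2 (qJ p w rh z x / (qRhZ p w rh z * pX p x))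

/-- Mutual information `I(Z;X)` of the fixed pmf `p`. -/
def IZX (p : 𝒵 → 𝒳 → ℛ → ℝ) : ℝ :=
  ∑ z, ∑ x, pZX p z x * logb 2 (pZX p z x / (pZ p z * pX p x))

/-- Entropy `H(Z)` of the fixed pmf `p`. -/
def HZ (p : 𝒵 → 𝒳 → ℛ → ℝ) : ℝ := -∑ z, pZ p z * logb 2 (pZ p z)

/-- The objective `g(w) = E_q[d] + μ₁ (I(R̂;X) − ε) + μ₂ (I(R̂,Z;X) − δ)`. -/
def gObj (p : 𝒵 → 𝒳 → ℛ → ℝ) (d : ℛh → ℛ → ℝ) (μ₁ μ₂ ε δ : ℝ)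
    (w : ℛh → 𝒵 → 𝒳 → ℝ) : ℝ :=
  expDist p w d + μ₁ * (IRhX p w - ε) + μ₂ * (IRhZX p w - δ)

/-- The constant `θ = (μ₁+μ₂) I(Z;X) − μ₁ H(Z) − μ₁ ε − μ₂ δ`, computed from `p` alone. -/
def θconst (p : 𝒵 → 𝒳 → ℛ → ℝ) (μ₁ μ₂ ε δ : ℝ) : ℝ :=
  (μ₁ + μ₂) * IZX p - μ₁ * HZ p - μ₁ * ε - μ₂ * δ

/-- The surrogate objective
`f(w; q₁; q₂; q₃) = ∑_{(r̂,z,x): p(z,x)>0} p(z,x) w(r̂|z,x) [∑_r p(r|z,x) d(r̂,r)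
  + (μ₁+μ₂) log₂ w(r̂|z,x) − μ₁ log₂ q₁(r̂) − μ₁ log₂ q₂(z|r̂,x) − μ₂ log₂ q₃(r̂|z)] + θ`. -/
def fObj (p : 𝒵 → 𝒳 → ℛ → ℝ) (d : ℛh → ℛ → ℝ) (μ₁ μ₂ ε δ : ℝ)
    (w : ℛh → 𝒵 → 𝒳 → ℝ) (q₁ : ℛh → ℝ) (q₂ : 𝒵 → ℛh → 𝒳 → ℝ) (q₃ : ℛh → 𝒵 → ℝ) : ℝ :=
  (∑ rh, ∑ z, ∑ x,
      if 0 < pZX p z x then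
        pZX p z x * w rh z x *
          ((∑ r, (p z x r / pZX p z x) * d rh r)
            + (μ₁ + μ₂) * logb 2 (w rh z x)
            - μ₁ * logb 2 (q₁ rh) - μ₁ * logb 2 (q₂ z rh x) - μ₂ * logb 2 (q₃ rh z))
      else 0)
    + θconst p μ₁ μ₂ ε δ

/-- `q₁` is a strictly positive pmf on `ℛ̂`. -/
def PosPMF1 (q₁ : ℛh → ℝ) : Prop := (∀ rh, 0 < q₁ rh) ∧ ∑ rh, q₁ rh = 1

/-- `q₂(·|r̂,x)` is, for each `(r̂,x)`, a strictly positive pmf on `𝒵`. -/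
def PosPMF2 (q₂ : 𝒵 → ℛh → 𝒳 → ℝ) : Prop :=
  (∀ z rh x, 0 < q₂ z rh x) ∧ ∀ rh x, ∑ z, q₂ z rh x = 1

/-- `q₃(·|z)` is, for each `z`, a strictly positive pmf on `ℛ̂`. -/
def PosPMF3 (q₃ : ℛh → 𝒵 → ℝ) : Prop :=
  (∀ rh z, 0 < q₃ rh z) ∧ ∀ z, ∑ rh, q₃ rh z = 1

/-- The conditional `p(z|x)`. -/
def pZgX (p : 𝒵 → 𝒳 → ℛ → ℝ) (z : 𝒵) (x : 𝒳) : ℝ := pZX p z x / pX p x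

/-- The conditional `p(x|z)`. -/
def pXgZ (p : 𝒵 → 𝒳 → ℛ → ℝ) (x : 𝒳) (z : 𝒵) : ℝ := pZX p z x / pZ p z

/-- The induced distribution `q₁'(r̂) = ∑_{z,x} w(r̂|z,x) p(z,x)`. -/
def q1ind (p : 𝒵 → 𝒳 → ℛ → ℝ) (w : ℛh → 𝒵 → 𝒳 → ℝ) (rh : ℛh) : ℝ :=
  ∑ z, ∑ x, w rh z x * pZX p z x

/-- The induced conditional `q₂'(z|r̂,x) = w(r̂|z,x) p(z|x) / ∑_{z'} w(r̂|z',x) p(z'|x)`. -/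
def q2ind (p : 𝒵 → 𝒳 → ℛ → ℝ) (w : ℛh → 𝒵 → 𝒳 → ℝ) (z : 𝒵) (rh : ℛh) (x : 𝒳) : ℝ :=
  w rh z x * pZgX p z x / ∑ z', w rh z' x * pZgX p z' x

/-- The induced conditional `q₃'(r̂|z) = ∑_x w(r̂|z,x) p(x|z)`. -/
def q3ind (p : 𝒵 → 𝒳 → ℛ → ℝ) (w : ℛh → 𝒵 → 𝒳 → ℝ) (rh : ℛh) (z : 𝒵) : ℝ :=
  ∑ x, w rh z x * pXgZ p x z

/-- The Blahut–Arimoto kernel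
`K(r̂,z,x) = [ q₁(r̂)^{μ₁} q₂(z|r̂,x)^{μ₁} q₃(r̂|z)^{μ₂} 2^{−∑_r p(r|z,x) d(r̂,r)} ]^{1/(μ₁+μ₂)}`. -/
def BAker (p : 𝒵 → 𝒳 → ℛ → ℝ) (d : ℛh → ℛ → ℝ) (μ₁ μ₂ : ℝ)
    (q₁ : ℛh → ℝ) (q₂ : 𝒵 → ℛh → 𝒳 → ℝ) (q₃ : ℛh → 𝒵 → ℝ)
    (rh : ℛh) (z : 𝒵) (x : 𝒳) : ℝ :=
  (q₁ rh ^ μ₁ * q₂ z rh x ^ μ₁ * q₃ rh z ^ μ₂ *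
      (2 : ℝ) ^ (-(∑ r, (p z x r / pZX p z x) * d rh r))) ^ (1 / (μ₁ + μ₂))

/-- The Blahut–Arimoto update channel `w'(r̂|z,x) = K(r̂,z,x) / ∑_{r̂'} K(r̂',z,x)`. -/
def BAw (p : 𝒵 → 𝒳 → ℛ → ℝ) (d : ℛh → ℛ → ℝ) (μ₁ μ₂ : ℝ)
    (q₁ : ℛh → ℝ) (q₂ : 𝒵 → ℛh → 𝒳 → ℝ) (q₃ : ℛh → 𝒵 → ℝ)
    (rh : ℛh) (z : 𝒵) (x : 𝒳) : ℝ :=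
  (1 / ∑ rh', BAker p d μ₁ μ₂ q₁ q₂ q₃ rh' z x) * BAker p d μ₁ μ₂ q₁ q₂ q₃ rh z x

theorem mul_logb_sub_logb_div_le {a S b : ℝ} (ha : 0 ≤ a) (hS : 0 < S) (hb : 0 < b) :
    a * (logb 2 b - logb 2 (a / S)) ≤ (S * b - a) / log 2 := by
  have hlog2 : 0 < log 2 := log_pos one_lt_two
  rcases ha.eq_or_lt with rfl | ha
  · simp only [zero_mul, sub_zero]
    positivity
  · have key := log_le_sub_one_of_pos (show 0 < S * b / a by positivity)
    rw [logb, logb, ← sub_div, ← log_div hb.ne' (by positivity), mul_div_assoc',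
      div_le_div_iff_of_pos_right hlog2]
    calc a * log (b / (a / S)) = a * log (S * b / a) := by rw [div_div_eq_mul_div, mul_comm b]
      _ ≤ a * (S * b / a - 1) := mul_le_mul_of_nonneg_left key ha.le
      _ = S * b - a := by field_simp

/-- Gibbs' inequality, in cross-entropy form. -/
theorem sum_mul_logb_le_sum_mul_logb_div_sum {ι : Type*} [Fintype ι] {a b : ι → ℝ}
    (ha : ∀ i, 0 ≤ a i) (hb : ∀ i, 0 < b i) (hb1 : ∑ i, b i = 1) :
    ∑ i, a i * logb 2 (b i) ≤ ∑ i, a i * logb 2 (a i / ∑ j, a j) := by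
  rcases (sum_nonneg fun i _ => ha i).eq_or_lt with hS | hS
  · have ha0 : ∀ i, a i = 0 := fun i =>
      (sum_eq_zero_iff_of_nonneg fun i _ => ha i).1 hS.symm i (mem_univ i)
    simp [ha0]
  · rw [← sub_nonpos, ← sum_sub_distrib]
    calc ∑ i, (a i * logb 2 (b i) - a i * logb 2 (a i / ∑ j, a j))
        ≤ ∑ i, ((∑ j, a j) * b i - a i) / log 2 := sum_le_sum fun i _ => by
          rw [← mul_sub]
          exact mul_logb_sub_logb_div_le (ha i) hS (hb i)
      _ = 0 := by rw [← sum_div, sum_sub_distrib, ← mul_sum, hb1, mul_one, sub_self, zero_div]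

theorem sum_div_sum_mul_logb_sub_logb_le {ι : Type*} [Fintype ι] {K w : ι → ℝ}
    (hK : ∀ i, 0 < K i) (hw : ∀ i, 0 ≤ w i) (hw1 : ∑ i, w i = 1) :
    ∑ i, K i / (∑ j, K j) * (logb 2 (K i / ∑ j, K j) - logb 2 (K i)) ≤
      ∑ i, w i * (logb 2 (w i) - logb 2 (K i)) := by
  obtain ⟨i₀, -, -⟩ := exists_ne_zero_of_sum_ne_zero (hw1 ▸ one_ne_zero)
  set S := ∑ j, K j
  have hS : 0 < S := sum_pos (fun i _ => hK i) ⟨i₀, mem_univ i₀⟩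
  have hlogb (i : ι) : logb 2 (K i / S) = logb 2 (K i) - logb 2 S :=
    logb_div (hK i).ne' hS.ne'
  have hKS : ∑ i, K i / S = 1 := by rw [← sum_div, div_self hS.ne']
  have hgibbs := sum_mul_logb_le_sum_mul_logb_div_sum hw (fun i => div_pos (hK i) hS) hKS
  simp only [hw1, div_one, hlogb, mul_sub, sum_sub_distrib, ← sum_mul, hKS, one_mul] at hgibbs ⊢
  linarith

section

variable {p : 𝒵 → 𝒳 → ℛ → ℝ} {d : ℛh → ℛ → ℝ} {μ₁ μ₂ ε δ : ℝ}
  {q₁ : ℛh → ℝ} {q₂ : 𝒵 → ℛh → 𝒳 → ℝ} {q₃ : ℛh → 𝒵 → ℝ}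

theorem nonempty_of_isPMF (hp : IsPMF p) : Nonempty 𝒵 ∧ Nonempty 𝒳 := by
  obtain ⟨z, -, hz⟩ := exists_ne_zero_of_sum_ne_zero (hp.2 ▸ one_ne_zero)
  obtain ⟨x, -, -⟩ := exists_ne_zero_of_sum_ne_zero hz
  exact ⟨⟨z⟩, ⟨x⟩⟩

theorem nonempty_of_posPMF1 (hq₁ : PosPMF1 q₁) : Nonempty ℛh := by
  obtain ⟨rh, -, -⟩ := exists_ne_zero_of_sum_ne_zero (hq₁.2 ▸ one_ne_zero)
  exact ⟨rh⟩

omit [Fintype 𝒳] in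
theorem pX_pos [Nonempty 𝒵] (hpZX : ∀ z x, 0 < pZX p z x) (x : 𝒳) : 0 < pX p x :=
  sum_pos (fun z _ => hpZX z x) univ_nonempty

omit [Fintype 𝒵] in
theorem pZ_pos [Nonempty 𝒳] (hpZX : ∀ z x, 0 < pZX p z x) (z : 𝒵) : 0 < pZ p z :=
  sum_pos (fun x _ => hpZX z x) univ_nonempty

omit [Fintype 𝒵] [Fintype 𝒳] in
theorem qJ_nonneg (hpZX : ∀ z x, 0 < pZX p z x) {w : ℛh → 𝒵 → 𝒳 → ℝ}
    (hw : IsChannel w) (rh : ℛh) (z : 𝒵) (x : 𝒳) : 0 ≤ qJ p w rh z x :=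
  mul_nonneg (hw.1 rh z x).1 (hpZX z x).le

omit [Fintype 𝒵] [Fintype 𝒳] [Fintype ℛh] in
theorem qJ_pos (hpZX : ∀ z x, 0 < pZX p z x) {w : ℛh → 𝒵 → 𝒳 → ℝ}
    (hw : ∀ rh z x, 0 < w rh z x) (rh : ℛh) (z : 𝒵) (x : 𝒳) : 0 < qJ p w rh z x :=
  mul_pos (hw rh z x) (hpZX z x)

theorem sum_qRh_eq_one (hp : IsPMF p) {w : ℛh → 𝒵 → 𝒳 → ℝ} (hw : ∀ z x, ∑ rh, w rh z x = 1) :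
    ∑ rh, qRh p w rh = 1 := by
  calc ∑ rh, qRh p w rh = ∑ z, ∑ x, ∑ rh, w rh z x * pZX p z x := by
        simp only [qRh, qJ]
        rw [sum_comm]
        exact sum_congr rfl fun z _ => sum_comm
    _ = ∑ z, ∑ x, pZX p z x := by simp only [← sum_mul, hw, one_mul]
    _ = 1 := hp.2

omit [Fintype 𝒵] in
theorem sum_qRhZ {w : ℛh → 𝒵 → 𝒳 → ℝ} (hw : ∀ z x, ∑ rh, w rh z x = 1) (z : 𝒵) :
    ∑ rh, qRhZ p w rh z = pZ p z := by
  simp only [qRhZ, qJ]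
  rw [sum_comm]
  simp only [← sum_mul, hw, one_mul]
  rfl

omit [Fintype 𝒳] [Fintype ℛh] in
theorem q2ind_eq (hpX : ∀ x, pX p x ≠ 0) (w : ℛh → 𝒵 → 𝒳 → ℝ) (z : 𝒵) (rh : ℛh) (x : 𝒳) :
    q2ind p w z rh x = qJ p w rh z x / qRhX p w rh x := by
  simp only [q2ind, pZgX, qRhX, qJ, mul_div_assoc', ← sum_div]
  exact div_div_div_cancel_right₀ (hpX x) _ _

omit [Fintype 𝒵] in
theorem q3ind_eq {w : ℛh → 𝒵 → 𝒳 → ℝ} (hw : ∀ z x, ∑ rh, w rh z x = 1) (rh : ℛh) (z : 𝒵) :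
    q3ind p w rh z = qRhZ p w rh z / ∑ rh', qRhZ p w rh' z := by
  rw [sum_qRhZ hw]
  simp only [q3ind, pXgZ, qRhZ, qJ, mul_div_assoc', ← sum_div]

omit [Fintype ℛh] in
theorem q1ind_pos [Nonempty 𝒵] [Nonempty 𝒳] (hpZX : ∀ z x, 0 < pZX p z x)
    {w : ℛh → 𝒵 → 𝒳 → ℝ} (hw : ∀ rh z x, 0 < w rh z x) (rh : ℛh) : 0 < q1ind p w rh :=
  sum_pos (fun z _ => sum_pos (fun x _ => qJ_pos hpZX hw rh z x) univ_nonempty) univ_nonempty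

omit [Fintype 𝒳] [Fintype ℛh] in
theorem q2ind_pos [Nonempty 𝒵] (hpZX : ∀ z x, 0 < pZX p z x)
    {w : ℛh → 𝒵 → 𝒳 → ℝ} (hw : ∀ rh z x, 0 < w rh z x) (z : 𝒵) (rh : ℛh) (x : 𝒳) :
    0 < q2ind p w z rh x := by
  rw [q2ind_eq (fun x => (pX_pos hpZX x).ne')]
  exact div_pos (qJ_pos hpZX hw rh z x) (sum_pos (fun z _ => qJ_pos hpZX hw rh z x) univ_nonempty)

omit [Fintype 𝒵] [Fintype ℛh] in
theorem q3ind_pos [Nonempty 𝒳] (hpZX : ∀ z x, 0 < pZX p z x)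
    {w : ℛh → 𝒵 → 𝒳 → ℝ} (hw : ∀ rh z x, 0 < w rh z x) (rh : ℛh) (z : 𝒵) :
    0 < q3ind p w rh z :=
  sum_pos (fun x _ => mul_pos (hw rh z x) (div_pos (hpZX z x) (pZ_pos hpZX z))) univ_nonempty

theorem fObj_eq_sub_sum_qJ_mul_logb (hpZX : ∀ z x, 0 < pZX p z x) (w : ℛh → 𝒵 → 𝒳 → ℝ)
    (q₁ : ℛh → ℝ) (q₂ : 𝒵 → ℛh → 𝒳 → ℝ) (q₃ : ℛh → 𝒵 → ℝ) :
    fObj p d μ₁ μ₂ ε δ w q₁ q₂ q₃ =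
      ∑ rh, ∑ z, ∑ x, qJ p w rh z x *
          ((∑ r, (p z x r / pZX p z x) * d rh r) + (μ₁ + μ₂) * logb 2 (w rh z x))
        - μ₁ * ∑ rh, ∑ z, ∑ x, qJ p w rh z x * logb 2 (q₁ rh)
        - μ₁ * ∑ rh, ∑ z, ∑ x, qJ p w rh z x * logb 2 (q₂ z rh x)
        - μ₂ * ∑ rh, ∑ z, ∑ x, qJ p w rh z x * logb 2 (q₃ rh z)
        + θconst p μ₁ μ₂ ε δ := by
  simp only [fObj, hpZX, if_true, qJ, mul_sum, ← sum_sub_distrib]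
  congr 1
  exact sum_congr rfl fun rh _ => sum_congr rfl fun z _ => sum_congr rfl fun x _ => by ring

theorem sum_qJ_mul_logb_le_q1ind (hp : IsPMF p) (hpZX : ∀ z x, 0 < pZX p z x)
    {w : ℛh → 𝒵 → 𝒳 → ℝ} (hw : IsChannel w) (hq₁ : PosPMF1 q₁) :
    ∑ rh, ∑ z, ∑ x, qJ p w rh z x * logb 2 (q₁ rh) ≤
      ∑ rh, ∑ z, ∑ x, qJ p w rh z x * logb 2 (q1ind p w rh) := by
  have h := sum_mul_logb_le_sum_mul_logb_div_sum (a := qRh p w)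
    (fun rh => sum_nonneg fun z _ => sum_nonneg fun x _ => qJ_nonneg hpZX hw rh z x)
    hq₁.1 hq₁.2
  rw [sum_qRh_eq_one hp hw.2] at h
  simp only [div_one] at h
  simp only [← sum_mul]
  exact h

theorem sum_qJ_mul_logb_le_q2ind (hpZX : ∀ z x, 0 < pZX p z x) (hpX : ∀ x, pX p x ≠ 0)
    {w : ℛh → 𝒵 → 𝒳 → ℝ} (hw : IsChannel w) (hq₂ : PosPMF2 q₂) :
    ∑ rh, ∑ z, ∑ x, qJ p w rh z x * logb 2 (q₂ z rh x) ≤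
      ∑ rh, ∑ z, ∑ x, qJ p w rh z x * logb 2 (q2ind p w z rh x) := by
  refine sum_le_sum fun rh _ => ?_
  rw [sum_comm]
  conv_rhs => rw [sum_comm]
  simp only [q2ind_eq hpX]
  exact sum_le_sum fun x _ => sum_mul_logb_le_sum_mul_logb_div_sum
    (fun z => qJ_nonneg hpZX hw rh z x)
    (fun z => hq₂.1 z rh x) (hq₂.2 rh x)

theorem sum_qJ_mul_logb_le_q3ind (hpZX : ∀ z x, 0 < pZX p z x)
    {w : ℛh → 𝒵 → 𝒳 → ℝ} (hw : IsChannel w) (hq₃ : PosPMF3 q₃) :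
    ∑ rh, ∑ z, ∑ x, qJ p w rh z x * logb 2 (q₃ rh z) ≤
      ∑ rh, ∑ z, ∑ x, qJ p w rh z x * logb 2 (q3ind p w rh z) := by
  simp only [← sum_mul, q3ind_eq hw.2]
  rw [sum_comm]
  conv_rhs => rw [sum_comm]
  exact sum_le_sum fun z _ => sum_mul_logb_le_sum_mul_logb_div_sum
    (fun rh => sum_nonneg fun x _ => qJ_nonneg hpZX hw rh z x)
    (fun rh => hq₃.1 rh z) (hq₃.2 z)

theorem fObj_induced_le [Nonempty 𝒵] (hp : IsPMF p) (hpZX : ∀ z x, 0 < pZX p z x)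
    (hμ₁ : 0 ≤ μ₁) (hμ₂ : 0 ≤ μ₂) {w : ℛh → 𝒵 → 𝒳 → ℝ} (hw : IsChannel w)
    (hq₁ : PosPMF1 q₁) (hq₂ : PosPMF2 q₂) (hq₃ : PosPMF3 q₃) :
    fObj p d μ₁ μ₂ ε δ w (q1ind p w) (q2ind p w) (q3ind p w) ≤ fObj p d μ₁ μ₂ ε δ w q₁ q₂ q₃ := by
  have h₁ := mul_le_mul_of_nonneg_left (sum_qJ_mul_logb_le_q1ind hp hpZX hw hq₁) hμ₁
  have h₂ := mul_le_mul_of_nonneg_left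
    (sum_qJ_mul_logb_le_q2ind hpZX (fun x => (pX_pos hpZX x).ne') hw hq₂) hμ₁
  have h₃ := mul_le_mul_of_nonneg_left (sum_qJ_mul_logb_le_q3ind hpZX hw hq₃) hμ₂
  rw [fObj_eq_sub_sum_qJ_mul_logb hpZX, fObj_eq_sub_sum_qJ_mul_logb hpZX]
  linarith

omit [Fintype 𝒵] [Fintype 𝒳] [Fintype ℛh] in
theorem BAker_pos (hq₁ : ∀ rh, 0 < q₁ rh) (hq₂ : ∀ z rh x, 0 < q₂ z rh x)
    (hq₃ : ∀ rh z, 0 < q₃ rh z) (rh : ℛh) (z : 𝒵) (x : 𝒳) :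
    0 < BAker p d μ₁ μ₂ q₁ q₂ q₃ rh z x := by
  have := hq₁ rh
  have := hq₂ z rh x
  have := hq₃ rh z
  unfold BAker
  positivity

omit [Fintype 𝒵] [Fintype 𝒳] in
theorem BAw_eq (rh : ℛh) (z : 𝒵) (x : 𝒳) :
    BAw p d μ₁ μ₂ q₁ q₂ q₃ rh z x =
      BAker p d μ₁ μ₂ q₁ q₂ q₃ rh z x / ∑ rh', BAker p d μ₁ μ₂ q₁ q₂ q₃ rh' z x :=
  one_div_mul_eq_div _ _

omit [Fintype 𝒵] [Fintype 𝒳] in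
theorem BAw_pos [Nonempty ℛh] (hq₁ : ∀ rh, 0 < q₁ rh) (hq₂ : ∀ z rh x, 0 < q₂ z rh x)
    (hq₃ : ∀ rh z, 0 < q₃ rh z) (rh : ℛh) (z : 𝒵) (x : 𝒳) :
    0 < BAw p d μ₁ μ₂ q₁ q₂ q₃ rh z x := by
  rw [BAw_eq]
  exact div_pos (BAker_pos hq₁ hq₂ hq₃ rh z x)
    (sum_pos (fun rh _ => BAker_pos hq₁ hq₂ hq₃ rh z x) univ_nonempty)

omit [Fintype 𝒵] [Fintype 𝒳] in
theorem isChannel_BAw [Nonempty ℛh] (hq₁ : ∀ rh, 0 < q₁ rh) (hq₂ : ∀ z rh x, 0 < q₂ z rh x)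
    (hq₃ : ∀ rh z, 0 < q₃ rh z) : IsChannel (BAw p d μ₁ μ₂ q₁ q₂ q₃) := by
  have hsum (z : 𝒵) (x : 𝒳) : ∑ rh, BAw p d μ₁ μ₂ q₁ q₂ q₃ rh z x = 1 := by
    simp only [BAw_eq, ← sum_div]
    exact div_self (sum_pos (fun rh _ => BAker_pos hq₁ hq₂ hq₃ rh z x) univ_nonempty).ne'
  refine ⟨fun rh z x => ⟨(BAw_pos hq₁ hq₂ hq₃ rh z x).le, ?_⟩, hsum⟩
  rw [← hsum z x]
  exact single_le_sum (fun rh _ => (BAw_pos hq₁ hq₂ hq₃ rh z x).le) (mem_univ rh)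

omit [Fintype 𝒵] [Fintype 𝒳] [Fintype ℛh] in
theorem mul_logb_BAker (hμ : μ₁ + μ₂ ≠ 0) (hq₁ : ∀ rh, 0 < q₁ rh)
    (hq₂ : ∀ z rh x, 0 < q₂ z rh x) (hq₃ : ∀ rh z, 0 < q₃ rh z) (rh : ℛh) (z : 𝒵) (x : 𝒳) :
    (μ₁ + μ₂) * logb 2 (BAker p d μ₁ μ₂ q₁ q₂ q₃ rh z x) =
      μ₁ * logb 2 (q₁ rh) + μ₁ * logb 2 (q₂ z rh x) + μ₂ * logb 2 (q₃ rh z)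
        - ∑ r, (p z x r / pZX p z x) * d rh r := by
  have := hq₁ rh
  have := hq₂ z rh x
  have := hq₃ rh z
  unfold BAker
  rw [logb_rpow_eq_mul_logb_of_pos (by positivity), logb_mul (by positivity) (by positivity),
    logb_mul (by positivity) (by positivity), logb_mul (by positivity) (by positivity),
    logb_rpow_eq_mul_logb_of_pos (hq₁ rh), logb_rpow_eq_mul_logb_of_pos (hq₂ z rh x),
    logb_rpow_eq_mul_logb_of_pos (hq₃ rh z), logb_rpow two_pos (by norm_num)]
  field_simp
  ring

theorem fObj_eq_sum_mul_sum_logb_sub_logb_BAker (hpZX : ∀ z x, 0 < pZX p z x)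
    (hμ : μ₁ + μ₂ ≠ 0) (hq₁ : ∀ rh, 0 < q₁ rh) (hq₂ : ∀ z rh x, 0 < q₂ z rh x)
    (hq₃ : ∀ rh z, 0 < q₃ rh z) (w : ℛh → 𝒵 → 𝒳 → ℝ) :
    fObj p d μ₁ μ₂ ε δ w q₁ q₂ q₃ =
      ∑ z, ∑ x, pZX p z x * (μ₁ + μ₂) *
          ∑ rh, w rh z x * (logb 2 (w rh z x) - logb 2 (BAker p d μ₁ μ₂ q₁ q₂ q₃ rh z x))
        + θconst p μ₁ μ₂ ε δ := by
  simp only [fObj, hpZX, if_true, mul_sum]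
  rw [sum_comm]
  refine congrArg (· + _) (sum_congr rfl fun z _ => ?_)
  rw [sum_comm]
  refine sum_congr rfl fun x _ => sum_congr rfl fun rh _ => ?_
  linear_combination
    (pZX p z x * w rh z x) * mul_logb_BAker (p := p) (d := d) hμ hq₁ hq₂ hq₃ rh z x

theorem fObj_BAw_le (hpZX : ∀ z x, 0 < pZX p z x) (hμ : 0 < μ₁ + μ₂)
    (hq₁ : ∀ rh, 0 < q₁ rh) (hq₂ : ∀ z rh x, 0 < q₂ z rh x) (hq₃ : ∀ rh z, 0 < q₃ rh z)
    {w : ℛh → 𝒵 → 𝒳 → ℝ} (hw : IsChannel w) :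
    fObj p d μ₁ μ₂ ε δ (BAw p d μ₁ μ₂ q₁ q₂ q₃) q₁ q₂ q₃ ≤ fObj p d μ₁ μ₂ ε δ w q₁ q₂ q₃ := by
  simp only [fObj_eq_sum_mul_sum_logb_sub_logb_BAker hpZX hμ.ne' hq₁ hq₂ hq₃, BAw_eq]
  refine add_le_add_left (sum_le_sum fun z _ => sum_le_sum fun x _ =>
    mul_le_mul_of_nonneg_left ?_ (mul_nonneg (hpZX z x).le hμ.le)) _
  exact sum_div_sum_mul_logb_sub_logb_le (fun rh => BAker_pos hq₁ hq₂ hq₃ rh z x)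
    (fun rh => (hw.1 rh z x).1) (hw.2 z x)

end

theorem statement7_general
    (p : 𝒵 → 𝒳 → ℛ → ℝ) (hp : IsPMF p) (hpZX : ∀ z x, 0 < pZX p z x)
    (d : ℛh → ℛ → ℝ)
    (μ₁ μ₂ : ℝ) (hμ₁ : 0 ≤ μ₁) (hμ₂ : 0 ≤ μ₂) (hμ : 0 < μ₁ + μ₂) (ε δ : ℝ)
    (q₁ : ℛh → ℝ) (hq₁ : PosPMF1 q₁)
    (q₂ : 𝒵 → ℛh → 𝒳 → ℝ) (hq₂ : PosPMF2 q₂)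
    (q₃ : ℛh → 𝒵 → ℝ) (hq₃ : PosPMF3 q₃) :
    (∀ rh, 0 < q1ind p (BAw p d μ₁ μ₂ q₁ q₂ q₃) rh) ∧
    (∀ z rh x, 0 < q2ind p (BAw p d μ₁ μ₂ q₁ q₂ q₃) z rh x) ∧
    (∀ rh z, 0 < q3ind p (BAw p d μ₁ μ₂ q₁ q₂ q₃) rh z) ∧
    ∀ w : ℛh → 𝒵 → 𝒳 → ℝ, IsChannel w →
      fObj p d μ₁ μ₂ ε δ (BAw p d μ₁ μ₂ q₁ q₂ q₃)
          (q1ind p (BAw p d μ₁ μ₂ q₁ q₂ q₃))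
          (q2ind p (BAw p d μ₁ μ₂ q₁ q₂ q₃))
          (q3ind p (BAw p d μ₁ μ₂ q₁ q₂ q₃)) ≤
        fObj p d μ₁ μ₂ ε δ w q₁ q₂ q₃ := by
  obtain ⟨_, _⟩ := nonempty_of_isPMF hp
  have := nonempty_of_posPMF1 hq₁
  have hW : ∀ rh z x, 0 < BAw p d μ₁ μ₂ q₁ q₂ q₃ rh z x := BAw_pos hq₁.1 hq₂.1 hq₃.1
  refine ⟨q1ind_pos hpZX hW, q2ind_pos hpZX hW, q3ind_pos hpZX hW, fun w hw => ?_⟩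
  calc _ ≤ fObj p d μ₁ μ₂ ε δ (BAw p d μ₁ μ₂ q₁ q₂ q₃) q₁ q₂ q₃ :=
        fObj_induced_le hp hpZX hμ₁ hμ₂ (isChannel_BAw hq₁.1 hq₂.1 hq₃.1) hq₁ hq₂ hq₃
    _ ≤ fObj p d μ₁ μ₂ ε δ w q₁ q₂ q₃ := fObj_BAw_le hpZX hμ hq₁.1 hq₂.1 hq₃.1 hw

/-- Assume `μ₁ + μ₂ > 0` and `p(z,x) > 0` for all `(z,x)`.  For strictly
positive `q₁, q₂, q₃`, let `w'` be the Blahut–Arimoto update channel and let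
`q₁', q₂', q₃'` be the distributions induced by `w'`.  Then `q₁', q₂', q₃'` are strictly
positive and `f(w'; q₁'; q₂'; q₃') ≤ f(w; q₁; q₂; q₃)` for every channel `w`; in
particular one full Blahut–Arimoto iteration does not increase the objective `f`. -/
theorem statement7
    (p : 𝒵 → 𝒳 → ℛ → ℝ) (hp : IsPMF p) (hpZX : ∀ z x, 0 < pZX p z x)
    (d : ℛh → ℛ → ℝ) (hd : ∀ rh r, 0 ≤ d rh r)
    (μ₁ μ₂ : ℝ) (hμ₁ : 0 ≤ μ₁) (hμ₂ : 0 ≤ μ₂) (hμ : 0 < μ₁ + μ₂) (ε δ : ℝ)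
    (q₁ : ℛh → ℝ) (hq₁ : PosPMF1 q₁)
    (q₂ : 𝒵 → ℛh → 𝒳 → ℝ) (hq₂ : PosPMF2 q₂)
    (q₃ : ℛh → 𝒵 → ℝ) (hq₃ : PosPMF3 q₃) :
    (∀ rh, 0 < q1ind p (BAw p d μ₁ μ₂ q₁ q₂ q₃) rh) ∧
    (∀ z rh x, 0 < q2ind p (BAw p d μ₁ μ₂ q₁ q₂ q₃) z rh x) ∧
    (∀ rh z, 0 < q3ind p (BAw p d μ₁ μ₂ q₁ q₂ q₃) rh z) ∧
    ∀ w : ℛh → 𝒵 → 𝒳 → ℝ, IsChannel w →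
      fObj p d μ₁ μ₂ ε δ (BAw p d μ₁ μ₂ q₁ q₂ q₃)
          (q1ind p (BAw p d μ₁ μ₂ q₁ q₂ q₃))
          (q2ind p (BAw p d μ₁ μ₂ q₁ q₂ q₃))
          (q3ind p (BAw p d μ₁ μ₂ q₁ q₂ q₃)) ≤
        fObj p d μ₁ μ₂ ε δ w q₁ q₂ q₃ :=
  statement7_general p hp hpZX d μ₁ μ₂ hμ₁ hμ₂ hμ ε δ q₁ hq₁ q₂ hq₂ q₃ hq₃
end
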